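/- arXiv:2211.00606 — 2 statements merged into one kernel-verified Lean document; each statement's English description precedes it below -/
import Mathlib

section
/- Let v ∈ ℝⁿ be a unit vector of a symmetric real n×n matrix A with eigenvalue λ, written v = (v', v_n) with v' ∈ ℝ^{n-1}. Write A in block form with upper-left (n-1)×(n-1) block B, last column x ∈ ℝ^{n-1} (above the diagonal), and lower-right entry a. If w ∈ ℝ^{n-1} is a unit eigenvector of B with eigenvalue μ, then |v_n · ⟨w, x⟩| ≤ |μ - λ|. -/
/-! Restricting `A v = λ v` to the first `n` coordinates gives `B v' + v_n x = λ v'`. Pairing with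
`w` and moving `B` across by symmetry turns this into `v_n ⟨w, x⟩ = (λ - μ) ⟨w, v'⟩`, and
`|⟨w, v'⟩| ≤ ‖w‖ ‖v'‖ ≤ 1` because `v'` is a truncation of the unit vector `v`. -/

open Matrix

theorem Matrix.IsSymm.mul_dotProduct_eq_of_mulVec_add_smul_eq {ι : Type*} [Fintype ι]
    {B : Matrix ι ι ℝ} (hB : B.IsSymm) {u w x : ι → ℝ} {c lam mu : ℝ}
    (hu : B *ᵥ u + c • x = lam • u) (hw : B *ᵥ w = mu • w) :
    c * (w ⬝ᵥ x) = (lam - mu) * (w ⬝ᵥ u) := by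
  have hBw : w ⬝ᵥ (B *ᵥ u) = mu * (w ⬝ᵥ u) := by
    rw [dotProduct_mulVec, ← mulVec_transpose, hB.eq, hw, smul_dotProduct, smul_eq_mul]
  have := congrArg (w ⬝ᵥ ·) hu
  simp only [dotProduct_add, dotProduct_smul, smul_eq_mul, hBw] at this
  linarith

theorem Matrix.mulVec_castSucc {α : Type*} [NonUnitalNonAssocSemiring α] {n : ℕ}
    (A : Matrix (Fin (n + 1)) (Fin (n + 1)) α) (v : Fin (n + 1) → α) (i : Fin n) :
    (A *ᵥ v) i.castSucc = (A.submatrix Fin.castSucc Fin.castSucc *ᵥ (v ∘ Fin.castSucc)) i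
      + A i.castSucc (Fin.last n) * v (Fin.last n) := by
  simp only [mulVec, dotProduct, Fin.sum_univ_castSucc, submatrix_apply, Function.comp_apply]

theorem EuclideanSpace.norm_toLp_comp_castSucc_le {𝕜 : Type*} [RCLike 𝕜] {n : ℕ}
    (v : EuclideanSpace 𝕜 (Fin (n + 1))) :
    ‖WithLp.toLp 2 (v ∘ Fin.castSucc)‖ ≤ ‖v‖ := by
  rw [EuclideanSpace.norm_eq, EuclideanSpace.norm_eq, Fin.sum_univ_castSucc]
  exact Real.sqrt_le_sqrt (le_add_of_nonneg_right (by positivity))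

theorem stmt_1 (n : ℕ) (A : Matrix (Fin (n + 1)) (Fin (n + 1)) ℝ)
    (hA : A.IsSymm)
    (v : EuclideanSpace ℝ (Fin (n + 1))) (hv : ‖v‖ = 1) (lam : ℝ)
    (hev : A.mulVec v = lam • (v : Fin (n + 1) → ℝ))
    (B : Matrix (Fin n) (Fin n) ℝ)
    (hB : B = A.submatrix Fin.castSucc Fin.castSucc)
    (x : Fin n → ℝ) (hx : ∀ i : Fin n, x i = A i.castSucc (Fin.last n))
    (w : EuclideanSpace ℝ (Fin n)) (hw : ‖w‖ = 1) (mu : ℝ)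
    (hew : B.mulVec w = mu • (w : Fin n → ℝ)) :
    |v (Fin.last n) * ∑ i : Fin n, w i * x i| ≤ |mu - lam| := by
  set u : Fin n → ℝ := v ∘ Fin.castSucc
  have hu : B *ᵥ u + v (Fin.last n) • x = lam • u := by
    ext i
    simpa [u, hB, hx, mul_comm] using (A.mulVec_castSucc v i).symm.trans (congrFun hev i.castSucc)
  have hBs : B.IsSymm := hB ▸ hA.submatrix Fin.castSucc
  have hwu : |w ⬝ᵥ u| ≤ 1 :=
    calc |w ⬝ᵥ u| = |inner ℝ w (WithLp.toLp 2 u)| := by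
          rw [EuclideanSpace.inner_toLp_toLp, dotProduct_comm]; rfl
      _ ≤ ‖w‖ * ‖WithLp.toLp 2 u‖ := abs_real_inner_le_norm _ _
      _ ≤ 1 := by
          rw [hw, one_mul, ← hv]; exact EuclideanSpace.norm_toLp_comp_castSucc_le v
  calc |v (Fin.last n) * ∑ i, w i * x i|
      = |lam - mu| * |w ⬝ᵥ u| := by
        rw [← abs_mul, ← hBs.mul_dotProduct_eq_of_mulVec_add_smul_eq hu hew]; rfl
    _ ≤ |mu - lam| := by rw [abs_sub_comm]; exact mul_le_of_le_one_right (abs_nonneg _) hwu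
end

section
/- Let ξ be a real random variable, v ∈ ℝⁿ, and let v' ∈ ℝ^m (m ≤ n) be the restriction of v to a subset I of its coordinates. Then for any r > 0, ρ_ξ(v, r) ≤ ρ_ξ(v', r), where ρ_ξ(x, r) = sup_{y∈ℝ} P(|⟨x, Ξ⟩ - y| ≤ r) and Ξ has i.i.d. coordinates distributed as ξ. -/
/-! Split `⟨v, Ξ⟩ = Y + X`, with `X` the sum over the coordinates in the image of `e` and `Y`
the sum over the others; `X` and `Y` are independent. Conditionally on `Y = s`, the event
`|Y + X - y| ≤ r` is `|X - (y - s)| ≤ r`, whose probability is at most the concentration of the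
restricted vector; integrating over the law of `Y` gives the claim. -/

open MeasureTheory ProbabilityTheory ENNReal

/-- The Lévy concentration function of the vector `x` with respect to the
random vector `Ξ`. -/
noncomputable def levyConc {Ω : Type*} [MeasureSpace Ω] {n : ℕ}
    (Ξ : Ω → Fin n → ℝ) (x : Fin n → ℝ) (ε : ℝ) : ℝ≥0∞ :=
  ⨆ y : ℝ, ℙ {ω | |(∑ i, x i * Ξ ω i) - y| ≤ ε}

namespace ProbabilityTheory

variable {Ω β γ : Type*} {mΩ : MeasurableSpace Ω} {μ : Measure Ω}

theorem IndepFun.measure_preimage_prodMk_le_iSup [IsProbabilityMeasure μ]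
    {_ : MeasurableSpace β} {_ : MeasurableSpace γ} {Y : Ω → β} {X : Ω → γ}
    (hY : Measurable Y) (hX : Measurable X) (hYX : IndepFun Y X μ) {S : Set (β × γ)}
    (hS : MeasurableSet S) :
    μ ((fun ω => (Y ω, X ω)) ⁻¹' S) ≤ ⨆ b, μ ((fun ω => (b, X ω)) ⁻¹' S) := by
  have : IsProbabilityMeasure (μ.map Y) := Measure.isProbabilityMeasure_map hY.aemeasurable
  rw [← Measure.map_apply (hY.prodMk hX) hS,
    (indepFun_iff_map_prod_eq_prod_map_map hY.aemeasurable hX.aemeasurable).mp hYX,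
    Measure.prod_apply hS]
  calc ∫⁻ b, μ.map X (Prod.mk b ⁻¹' S) ∂μ.map Y
      ≤ ∫⁻ _, ⨆ b, μ ((fun ω => (b, X ω)) ⁻¹' S) ∂μ.map Y := by
        refine lintegral_mono fun b => ?_
        rw [Measure.map_apply hX (measurable_prodMk_left hS)]
        exact le_iSup (fun b => μ ((fun ω => (b, X ω)) ⁻¹' S)) b
    _ = ⨆ b, μ ((fun ω => (b, X ω)) ⁻¹' S) := by simp

theorem IndepFun.iSup_measure_abs_add_sub_le [IsProbabilityMeasure μ] {Y X : Ω → ℝ}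
    (hY : Measurable Y) (hX : Measurable X) (hYX : IndepFun Y X μ) (r : ℝ) :
    ⨆ y, μ {ω | |Y ω + X ω - y| ≤ r} ≤ ⨆ z, μ {ω | |X ω - z| ≤ r} := by
  refine iSup_le fun y => ?_
  have hS : MeasurableSet {p : ℝ × ℝ | |p.1 + p.2 - y| ≤ r} :=
    measurableSet_le (by fun_prop) measurable_const
  refine (hYX.measure_preimage_prodMk_le_iSup hY hX hS).trans (iSup_le fun s => ?_)
  have hshift : ∀ ω, s + X ω - y = X ω - (y - s) := fun ω => by ring
  simp only [Set.preimage_ofPred_eq, hshift]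
  exact le_iSup (fun z => μ {ω | |X ω - z| ≤ r}) (y - s)

theorem iIndepFun.indepFun_finsetSum_finsetSum {ι : Type*} [MeasurableSpace β] [AddCommMonoid β]
    [MeasurableAdd₂ β] {f : ι → Ω → β}
    (hf : iIndepFun f μ) (hf_meas : ∀ i, Measurable (f i)) {S T : Finset ι}
    (hST : Disjoint S T) :
    IndepFun (∑ i ∈ S, f i) (∑ i ∈ T, f i) μ := by
  have hsum : ∀ U : Finset ι, (∑ i ∈ U, f i) = (fun x : U → β => ∑ i, x i) ∘
      fun ω (i : U) => f i ω := fun U => by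
    funext ω
    simp only [Finset.sum_apply, Function.comp_apply]
    exact (Finset.sum_attach U fun i => f i ω).symm
  rw [hsum S, hsum T]
  exact (hf.indepFun_finset S T hST hf_meas).comp
    (Finset.measurable_sum _ fun i _ => measurable_pi_apply i)
    (Finset.measurable_sum _ fun i _ => measurable_pi_apply i)

end ProbabilityTheory

open Finset in
theorem stmt_5_general {Ω : Type*} [MeasureSpace Ω]
    {n m : ℕ} (Ξ : Ω → Fin n → ℝ)
    (hmeas : ∀ i, Measurable fun ω => Ξ ω i)
    (hindep : iIndepFun
      (fun i ω => Ξ ω i) ℙ)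
    (v : Fin n → ℝ) (e : Fin m ↪ Fin n) (r : ℝ) :
    levyConc Ξ v r ≤ levyConc (fun ω i => Ξ ω (e i)) (fun i => v (e i)) r := by
  have := hindep.isProbabilityMeasure
  set g : Fin n → Ω → ℝ := fun i ω => v i * Ξ ω i
  have hg_meas : ∀ i, Measurable (g i) := fun i => (hmeas i).const_mul (v i)
  have hg_indep : iIndepFun g ℙ := hindep.comp _ fun i => measurable_const_mul (v i)
  set I := univ.map e
  have hsplit : ∀ ω, ∑ i, v i * Ξ ω i = (∑ j ∈ Iᶜ, g j) ω + (∑ j ∈ I, g j) ω := by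
    intro ω
    simp only [Finset.sum_apply, add_comm, sum_add_sum_compl, g]
  have hrestrict : ∀ ω, ∑ i, v (e i) * Ξ ω (e i) = (∑ j ∈ I, g j) ω := fun ω => by
    simp only [Finset.sum_apply, I, sum_map, g]
  simp only [levyConc, hsplit, hrestrict]
  exact (hg_indep.indepFun_finsetSum_finsetSum hg_meas disjoint_compl_left)
    |>.iSup_measure_abs_add_sub_le (by fun_prop) (by fun_prop) r

theorem stmt_5 {Ω : Type*} [MeasureSpace Ω] [IsProbabilityMeasure (ℙ : Measure Ω)]
    {n m : ℕ} (hmn : m ≤ n) (ξ : Ω → ℝ) (Ξ : Ω → Fin n → ℝ)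
    (hmeas : ∀ i, Measurable fun ω => Ξ ω i)
    (hindep : iIndepFun
      (fun i ω => Ξ ω i) ℙ)
    (hid : ∀ i : Fin n, IdentDistrib (fun ω => Ξ ω i) ξ ℙ ℙ)
    (v : Fin n → ℝ) (e : Fin m ↪ Fin n) (r : ℝ) (hr : 0 < r) :
    levyConc Ξ v r ≤ levyConc (fun ω i => Ξ ω (e i)) (fun i => v (e i)) r :=
  stmt_5_general Ξ hmeas hindep v e r
end
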